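/- arXiv:2103.02836 — 5 statements merged into one kernel-verified Lean document; each statement's English description precedes it below -/
import Mathlib

section
/- Let a ≥ b ≥ 1 with gcd(a,b)=1, write a/b = N + ρ with 0 ≤ ρ < 1, and define a_i = ⌈a·i/b⌉ − ⌈a·(i−1)/b⌉ for 1 ≤ i ≤ b and N = ⌊a/b⌋. If ρ > 1/2, then there is no index i with 1 ≤ i < b such that a_i = N and a_{i+1} = N. -/
theorem stmt_3 (a b : ℕ) (hb : 1 ≤ b) (hab : b ≤ a) (hcop : Nat.Coprime a b)
    (N : ℤ) (hN : N = ⌊(a : ℚ) / b⌋) (ρ : ℚ) (hρ : ρ = (a : ℚ) / b - N)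
    (hhalf : 1 / 2 < ρ) :
    ¬ ∃ i : ℕ, 1 ≤ i ∧ i < b ∧
      ⌈((a * i : ℕ) : ℚ) / b⌉ - ⌈((a * (i - 1) : ℕ) : ℚ) / b⌉ = N ∧
      ⌈((a * (i + 1) : ℕ) : ℚ) / b⌉ - ⌈((a * i : ℕ) : ℚ) / b⌉ = N := by
  rintro ⟨i, h1, h2, hA, hB⟩
  obtain ⟨j, rfl⟩ : ∃ j, i = j + 1 := ⟨i - 1, by omega⟩
  have hb0 : (0 : ℚ) < (b : ℚ) := by exact_mod_cast (by omega : 0 < b)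
  have hcast : ((a * (j + 1 + 1) : ℕ) : ℚ) = ((a * (j + 1 - 1) : ℕ) : ℚ) + 2 * a := by
    have : a * (j + 1 + 1) = a * (j + 1 - 1) + 2 * a := by simp only [Nat.add_sub_cancel]; ring
    rw [this]; push_cast; ring
  have hy : ((a * (j + 1 + 1) : ℕ) : ℚ) / b
      = ((a * (j + 1 - 1) : ℕ) : ℚ) / b + 2 * ((N : ℚ) + ρ) := by
    rw [hcast, add_div]
    have : (N : ℚ) + ρ = (a : ℚ) / b := by rw [hρ]; ring
    rw [this]; ring
  have hC : ⌈((a * (j + 1 + 1) : ℕ) : ℚ) / b⌉ = ⌈((a * (j + 1 - 1) : ℕ) : ℚ) / b⌉ + 2 * N := by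
    omega
  have h3 := Int.le_ceil (((a * (j + 1 + 1) : ℕ) : ℚ) / b)
  have h4 := Int.ceil_lt_add_one (((a * (j + 1 - 1) : ℕ) : ℚ) / b)
  have hCq : (⌈((a * (j + 1 + 1) : ℕ) : ℚ) / b⌉ : ℚ)
      = (⌈((a * (j + 1 - 1) : ℕ) : ℚ) / b⌉ : ℚ) + 2 * (N : ℚ) := by exact_mod_cast hC
  rw [hy] at h3 hCq
  linarith
end

section
/- Let a ≥ b ≥ 1 with gcd(a,b)=1, write a/b = N + ρ with N = ⌊a/b⌋, and define a_i = ⌈a·i/b⌉ − ⌈a·(i−1)/b⌉. If 0 < ρ < 1/2, then there is no index i with 1 ≤ i < b such that a_i = N+1 and a_{i+1} = N+1. -/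
theorem stmt_4 (a b : ℕ) (hb : 1 ≤ b) (hab : b ≤ a) (hcop : Nat.Coprime a b)
    (N : ℤ) (hN : N = ⌊(a : ℚ) / b⌋) (ρ : ℚ) (hρ : ρ = (a : ℚ) / b - N)
    (h0 : 0 < ρ) (hhalf : ρ < 1 / 2) :
    ¬ ∃ i : ℕ, 1 ≤ i ∧ i < b ∧
      ⌈((a * i : ℕ) : ℚ) / b⌉ - ⌈((a * (i - 1) : ℕ) : ℚ) / b⌉ = N + 1 ∧
      ⌈((a * (i + 1) : ℕ) : ℚ) / b⌉ - ⌈((a * i : ℕ) : ℚ) / b⌉ = N + 1 := by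
  rintro ⟨i, hi1, hib, h1, h2⟩
  have hb0 : (0 : ℚ) < (b : ℚ) := by exact_mod_cast hb
  have hq : (a : ℚ) / b = N + ρ := by rw [hρ]; ring
  have hceil2 : ⌈(2 * a : ℚ) / b⌉ = 2 * N + 1 := by
    rw [Int.ceil_eq_iff]
    have : (2 * a : ℚ) / b = 2 * N + 2 * ρ := by
      rw [mul_div_assoc, hq]; ring
    rw [this]
    constructor
    · push_cast; linarith
    · push_cast; linarith
  have hsplit : a * (i + 1) = a * (i - 1) + 2 * a := by
    have h : i - 1 + 2 = i + 1 := by omega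
    calc a * (i + 1) = a * (i - 1 + 2) := by rw [h]
      _ = a * (i - 1) + 2 * a := by ring
  have key : ((a * (i + 1) : ℕ) : ℚ) / b
      = ((a * (i - 1) : ℕ) : ℚ) / b + (2 * a : ℚ) / b := by
    rw [hsplit]; push_cast; ring
  have hle := Int.ceil_add_le (((a * (i - 1) : ℕ) : ℚ) / b) ((2 * a : ℚ) / b)
  rw [← key, hceil2] at hle
  omega
end

section
/- Let n ≥ 1 and define polynomials f_n(x) = Σ_{k=0}^{n} (−1)^{n−k} · C(n+k, n−k) · x^{2k}. Let m ≥ 2 be an integer and x = 2cos(π/m). If 1 ≤ k ≤ ⌈m/2⌉ − 1, then f_k(x) ≥ 0. -/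
/-!
With `S` the rescaled Chebyshev polynomials of the second kind, `f_n = S_{2n}`: in the form
`f_n(x) = ∑ₖ (-1)^(n+k) C(n+k, 2k) x^(2k)` both sides satisfy
`u_{n+2} = (x² - 2) u_{n+1} - u_n`, the coefficients by a double Pascal step. Hence
`f_k(2 cos θ) sin θ = sin ((2k+1) θ)`, and for `θ = π/m` with `2k + 1 ≤ m` both sines are
nonnegative, the first one strictly.
-/

open Finset Polynomial Real

theorem Nat.choose_add_two_add_choose (N r : ℕ) :
    (N + 2).choose (r + 2) + N.choose (r + 2) = 2 * (N + 1).choose (r + 2) + N.choose r := by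
  simp only [Nat.choose_succ_succ]
  ring

namespace Polynomial.Chebyshev

variable {R : Type*} [CommRing R]

theorem S_two_mul_add_two (n : ℤ) :
    S R (2 * (n + 2)) = (X ^ 2 - 2) * S R (2 * (n + 1)) - S R (2 * n) := by
  have h₄ := S_add_two R (2 * n + 2)
  have h₃ := S_add_two R (2 * n + 1)
  have h₂ := S_add_two R (2 * n)
  ring_nf at h₄ h₃ h₂ ⊢
  linear_combination h₄ + X * h₃ + h₂

theorem sum_range_choose_two_mul_of_lt (x : R) {n N : ℕ} (h : n < N) :
    ∑ k ∈ range N, (-1) ^ (n + k) * ((n + k).choose (2 * k) : R) * x ^ (2 * k) =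
      ∑ k ∈ range (n + 1), (-1) ^ (n + k) * ((n + k).choose (2 * k) : R) * x ^ (2 * k) := by
  refine (sum_subset (range_subset_range.2 h) fun k _ hk => ?_).symm
  rw [Nat.choose_eq_zero_of_lt (by simp at hk; omega)]
  simp

theorem eval_S_two_mul (x : R) (n : ℕ) {N : ℕ} (h : n < N) :
    (S R (2 * n)).eval x =
      ∑ k ∈ range N, (-1) ^ (n + k) * ((n + k).choose (2 * k) : R) * x ^ (2 * k) := by
  induction n using Nat.twoStepInduction generalizing N with
  | zero =>
    rw [sum_range_choose_two_mul_of_lt x h]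
    simp
  | one =>
    rw [sum_range_choose_two_mul_of_lt x h]
    simp [sum_range_succ, S_two]
    ring
  | more n ih₀ ih₁ =>
    obtain ⟨M, rfl⟩ : ∃ M, N = M + 1 := ⟨N - 1, by omega⟩
    have hterm (k : ℕ) :
        (-1) ^ (n + 2 + (k + 1)) * ((n + 2 + (k + 1)).choose (2 * (k + 1)) : R) * x ^ (2 * (k + 1)) =
          x ^ 2 * ((-1) ^ (n + 1 + k) * ((n + 1 + k).choose (2 * k) : R) * x ^ (2 * k)) -
          2 * ((-1) ^ (n + 1 + (k + 1)) * ((n + 1 + (k + 1)).choose (2 * (k + 1)) : R) *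
            x ^ (2 * (k + 1))) -
          (-1) ^ (n + (k + 1)) * ((n + (k + 1)).choose (2 * (k + 1)) : R) * x ^ (2 * (k + 1)) := by
      have hpascal := Nat.choose_add_two_add_choose (n + k + 1) (2 * k)
      rw [show n + k + 1 + 2 = n + 2 + (k + 1) by ring, show 2 * k + 2 = 2 * (k + 1) by ring,
        show n + k + 1 + 1 = n + 1 + (k + 1) by ring, show n + k + 1 = n + (k + 1) by ring]
        at hpascal
      rw [show n + 1 + k = n + (k + 1) by ring]
      have hcast := congrArg (fun t : ℕ => (t : R)) hpascal
      push_cast at hcast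
      linear_combination (-1) ^ (n + k + 1) * x ^ (2 * k + 2) * hcast
    push_cast at ih₁ ⊢
    rw [S_two_mul_add_two, eval_sub, eval_mul, eval_sub, eval_pow, eval_X, eval_ofNat, sub_mul]
    nth_rw 1 [ih₁ (N := M) (by omega)]
    rw [ih₁ (N := M + 1) (by omega), ih₀ (N := M + 1) (by omega),
      sum_range_succ' _ M, sum_range_succ' _ M, sum_range_succ' _ M,
      sum_congr rfl fun k _ => hterm k, sum_sub_distrib, sum_sub_distrib, ← mul_sum, ← mul_sum]
    simp only [add_zero, mul_zero, Nat.choose_zero_right, Nat.cast_one, pow_zero]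
    ring

theorem eval_S_two_mul_eq_sum (x : R) (n : ℕ) :
    (S R (2 * n)).eval x =
      ∑ k ∈ range (n + 1), (-1) ^ (n - k) * ((n + k).choose (n - k) : R) * x ^ (2 * k) := by
  rw [eval_S_two_mul x n n.lt_succ_self]
  refine sum_congr rfl fun k hk => ?_
  have hsplit : n + k = (n - k) + 2 * k := by simp at hk; omega
  rw [Nat.choose_symm_of_eq_add hsplit, hsplit, pow_add, pow_mul]
  simp

theorem S_eval_two_mul_cos_pi_div_nonneg {n m : ℕ} (h : n < m) :
    0 ≤ (S ℝ n).eval (2 * cos (π / m)) := by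
  obtain rfl | hm : m = 1 ∨ 1 < m := by omega
  · obtain rfl : n = 0 := by omega
    simp
  have hm' : (1 : ℝ) < m := by exact_mod_cast hm
  have hsin : 0 < sin (π / m) :=
    sin_pos_of_pos_of_lt_pi (by positivity) (div_lt_self pi_pos hm')
  refine nonneg_of_mul_nonneg_left ?_ hsin
  rw [S_two_mul_real_cos]
  refine sin_nonneg_of_nonneg_of_le_pi (by positivity) ?_
  have hnm : ((n : ℤ) : ℝ) + 1 ≤ m := by exact_mod_cast h
  calc (((n : ℤ) : ℝ) + 1) * (π / m) ≤ m * (π / m) := by gcongr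
    _ = π := by field_simp

end Polynomial.Chebyshev

theorem stmt_12_general (m : ℕ) (x : ℝ) (hx : x = 2 * Real.cos (Real.pi / m))
    (f : ℕ → ℝ → ℝ)
    (hf : ∀ (n : ℕ) (y : ℝ), f n y =
      ∑ k ∈ Finset.range (n + 1), (-1 : ℝ) ^ (n - k) * (Nat.choose (n + k) (n - k)) * y ^ (2 * k)) :
    ∀ k : ℕ, 1 ≤ k → k ≤ (m + 1) / 2 - 1 → 0 ≤ f k x := by
  intro k hk₁ hk₂
  rw [hf, hx, ← Chebyshev.eval_S_two_mul_eq_sum]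
  exact_mod_cast Chebyshev.S_eval_two_mul_cos_pi_div_nonneg (by omega : 2 * k < m)

theorem stmt_12 (m : ℕ) (hm : 2 ≤ m) (x : ℝ) (hx : x = 2 * Real.cos (Real.pi / m))
    (f : ℕ → ℝ → ℝ)
    (hf : ∀ (n : ℕ) (y : ℝ), f n y =
      ∑ k ∈ Finset.range (n + 1), (-1 : ℝ) ^ (n - k) * (Nat.choose (n + k) (n - k)) * y ^ (2 * k)) :
    ∀ k : ℕ, 1 ≤ k → k ≤ (m + 1) / 2 - 1 → 0 ≤ f k x :=
  stmt_12_general m x hx f hf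
end

section
/- Let k ≥ 2 and consider the free monoid on {s₁, s₂, s₃} with the degree-lexicographic order induced by s₁ ≻ s₂ ≻ s₃. The set S = {s₁² − e, s₂² − e, s₃² − e, (s₁s₂)^{k−1}s₁ − (s₂s₁)^{k−1}s₂, (s₂s₃)^{k−1}s₂ − (s₃s₂)^{k−1}s₃} is closed under composition (all composition of intersection and inclusion reduce to zero modulo S), hence is a Gröbner–Shirshov basis for the group algebra of W(2k−1). -/
/-!
The letters `0, 1, 2` stand for `s₁, s₂, s₃`, and `c = k - 1`.

`W` acts on standard words: `nfCons c i w` is the standard form of `sᵢ w`. These maps preserve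
standardness and are involutions, and the composites for `s₁, s₂` and for `s₂, s₃` have order
dividing `2c + 1`: a standard word is an alternating word in the two letters followed by a
tail beginning with neither, and the composite cycles the alternating part through an orbit of
`2c + 1` words. Acting on the empty word then inverts the evaluation map, so standard words
are in bijection with `W` and form a basis of `ℚ[W]`.
-/

namespace GrobnerShirshovW

open Function

section AltWords

variable {α : Type*}

def alt (x y : α) : ℕ → List α
  | 0 => []
  | n + 1 => x :: alt y x n

@[simp] theorem alt_zero (x y : α) : alt x y 0 = [] := rfl

theorem alt_succ (x y : α) (n : ℕ) : alt x y (n + 1) = x :: alt y x n := rfl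

@[simp] theorem length_alt (x y : α) (n : ℕ) : (alt x y n).length = n := by
  induction n generalizing x y with
  | zero => rfl
  | succ n ih => simp [alt_succ, ih]

theorem head?_alt {x y : α} {n : ℕ} (hn : 0 < n) : (alt x y n).head? = some x := by
  obtain ⟨n, rfl⟩ := Nat.exists_eq_add_of_lt hn
  rfl

theorem head?_of_alt_prefix {x y : α} {n : ℕ} {l : List α} (hn : 0 < n) (h : alt x y n <+: l) :
    l.head? = some x := by
  obtain ⟨t, rfl⟩ := h
  simp [List.head?_append, head?_alt hn]

theorem map_alt {β : Type*} (g : α → β) (x y : α) (n : ℕ) :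
    (alt x y n).map g = alt (g x) (g y) n := by
  induction n generalizing x y with
  | zero => rfl
  | succ n ih => simp [alt_succ, ih]

theorem alt_two_mul_succ (x y : α) (n : ℕ) : alt x y (2 * n + 1) = alt x y (2 * n) ++ [x] := by
  induction n with
  | zero => rfl
  | succ n ih => rw [show 2 * (n + 1) + 1 = 2 * n + 1 + 2 by ring, alt_succ, alt_succ, ih]; rfl

theorem alt_two_mul_add_two (x y : α) (n : ℕ) :
    alt x y (2 * n + 2) = alt x y (2 * n) ++ [x, y] := by
  rw [alt_succ, alt_two_mul_succ, ← List.cons_append, ← alt_succ, alt_two_mul_succ]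
  simp

theorem alt_two_mul_of_pos (x y : α) {n : ℕ} (hn : 0 < n) :
    alt x y (2 * n) = alt x y (2 * (n - 1)) ++ [x, y] := by
  obtain ⟨n, rfl⟩ := Nat.exists_eq_add_of_lt hn
  rw [show 2 * (0 + n + 1) = 2 * n + 2 by ring, alt_two_mul_add_two]
  simp

theorem alt_two_mul_append_cons_cons (x y : α) (n : ℕ) (t : List α) :
    alt x y (2 * n) ++ x :: y :: t = x :: (alt y x (2 * n) ++ y :: t) := by
  have e := alt_succ x y (2 * n + 1)
  rw [alt_two_mul_add_two, alt_two_mul_succ] at e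
  simpa using congrArg (· ++ t) e

theorem alt_prefix_alt (x y : α) {m n : ℕ} (h : m ≤ n) : alt x y m <+: alt x y n := by
  induction m generalizing x y n with
  | zero => exact List.nil_prefix
  | succ m ih =>
    cases n with
    | zero => omega
    | succ n => exact List.cons_prefix_cons.mpr ⟨rfl, ih y x (by omega)⟩

theorem eq_alt_of_prefix {u : List α} {x y : α} {n : ℕ} (h : u <+: alt x y n) :
    u = alt x y u.length := by
  induction u generalizing x y n with
  | nil => rfl
  | cons a u ih =>
    cases n with
    | zero => simp at h
    | succ n =>
      obtain ⟨rfl, h⟩ := List.cons_prefix_cons.mp h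
      rw [List.length_cons, alt_succ, ← ih h]

theorem eq_alt_of_infix {u : List α} {x y : α} {n : ℕ} (h : u <:+: alt x y n) :
    u = alt x y u.length ∨ u = alt y x u.length := by
  induction n generalizing x y with
  | zero => simp_all
  | succ n ih =>
    rcases List.infix_cons_iff.mp h with h | h
    · exact .inl (eq_alt_of_prefix (n := n + 1) h)
    · exact (ih h).symm

theorem eq_of_three_infix_alt {v w z x y : α} {n : ℕ} (h : [v, w, z] <:+: alt x y n) :
    v = z := by
  rcases eq_alt_of_infix h with h | h <;> simp [alt_succ] at h <;> grind

theorem head?_of_alt_prefix_alt_append {x y : α} {n L : ℕ} {r : List α} (hL : L < n)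
    (h : alt x y n <+: alt x y L ++ r) : r.head? = some x ∨ r.head? = some y := by
  induction L generalizing x y n with
  | zero =>
    obtain ⟨t, rfl⟩ := h
    simp [List.head?_append, head?_alt hL]
  | succ L ih =>
    cases n with
    | zero => omega
    | succ n => exact (ih (by omega) (List.cons_prefix_cons.mp h).2).symm

theorem eq_alt_of_forall_mem {w : List α} {x y : α} (hmem : ∀ z ∈ w, z = x ∨ z = y)
    (hxx : ¬ [x, x] <:+: w) (hyy : ¬ [y, y] <:+: w) :
    w = alt x y w.length ∨ w = alt y x w.length := by
  induction w with
  | nil => simp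
  | cons z t ih =>
    have ht := ih (fun v hv => hmem v (.tail _ hv))
      (fun h => hxx (h.trans (List.suffix_cons _ _).isInfix))
      (fun h => hyy (h.trans (List.suffix_cons _ _).isInfix))
    have hcons : ∀ {a b : α}, ¬ [a, a] <:+: a :: t → t = alt a b t.length → t = [] := by
      intro a b haa ht
      rcases t with _ | ⟨d, t⟩
      · rfl
      · simp only [List.length_cons, alt_succ, List.cons.injEq] at ht
        exact absurd ⟨[], t, by rw [ht.1]; rfl⟩ haa
    rcases hmem z (.head _) with rfl | rfl <;> rcases ht with ht | ht
    · exact .inl (by rw [hcons hxx ht]; rfl)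
    · exact .inl (by rw [List.length_cons, alt_succ, ← ht])
    · exact .inr (by rw [List.length_cons, alt_succ, ← ht])
    · exact .inr (by rw [hcons hyy ht]; rfl)

theorem flatten_replicate_append_eq_alt (x y : α) (n : ℕ) :
    (List.replicate n [x, y]).flatten ++ [x] = alt x y (2 * n + 1) := by
  induction n with
  | zero => rfl
  | succ n ih =>
    rw [List.replicate_succ, List.flatten_cons, List.append_assoc, ih,
      show 2 * (n + 1) + 1 = 2 * n + 1 + 2 by ring]
    rfl

theorem exists_alt_append [DecidableEq α] {x y : α} {m : ℕ} (l : List α)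
    (hxx : ¬ [x, x] <:+: l) (hyy : ¬ [y, y] <:+: l) (hm : ¬ alt x y m <:+: l) :
    ∃ a r n, l = a ++ r ∧ r.head? ≠ some x ∧ r.head? ≠ some y ∧
      (a = alt x y n ∧ n < m ∨ a = alt y x n ∧ n ≤ m) := by
  set p : α → Bool := fun z => decide (z = x ∨ z = y)
  have hpre : l.takeWhile p <+: l := List.takeWhile_prefix _
  have hhead : ∀ z, (l.dropWhile p).head? = some z → ¬ (z = x ∨ z = y) := by
    intro z hz
    have := List.head?_dropWhile_not p l
    rw [hz] at this
    simpa [p] using this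
  refine ⟨_, _, (l.takeWhile p).length, List.takeWhile_append_dropWhile.symm,
    fun h => hhead x h (.inl rfl),
    fun h => hhead y h (.inr rfl), ?_⟩
  rcases eq_alt_of_forall_mem (fun z hz => by simpa [p] using List.mem_takeWhile_imp hz)
    (fun h => hxx (h.trans hpre.isInfix)) (fun h => hyy (h.trans hpre.isInfix)) with ha | ha
  · refine .inl ⟨ha, Nat.lt_of_not_le fun hle => hm ?_⟩
    rw [ha] at hpre
    exact ((alt_prefix_alt x y hle).trans hpre).isInfix
  · refine .inr ⟨ha, Nat.le_of_not_lt fun hlt => hm ?_⟩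
    rw [ha] at hpre
    obtain ⟨n, hn⟩ := Nat.exists_eq_add_of_lt hlt
    rw [hn, alt_succ] at hpre
    exact ((alt_prefix_alt x y (Nat.le_add_right m n)).isInfix.trans
      (List.suffix_cons _ _).isInfix).trans hpre.isInfix

end AltWords

section Standard

def leadingWords (c : ℕ) : List (List (Fin 3)) :=
  [[0, 0], [1, 1], [2, 2], alt 0 1 (2 * c + 1), alt 1 2 (2 * c + 1)]

def IsStandard (c : ℕ) (l : List (Fin 3)) : Prop := ∀ u ∈ leadingWords c, ¬ u <:+: l

variable {c : ℕ}

theorem isStandard_nil : IsStandard c [] := by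
  intro u hu h
  rw [List.eq_nil_of_infix_nil h] at hu
  simp [leadingWords, alt_succ] at hu

theorem IsStandard.mono {l w : List (Fin 3)} (h : IsStandard c l) (hw : w <:+: l) :
    IsStandard c w :=
  fun u hu hinf => h u hu (hinf.trans hw)

theorem IsStandard.suffix {l w : List (Fin 3)} (h : IsStandard c l) (hw : w <:+ l) :
    IsStandard c w :=
  h.mono hw.isInfix

theorem isStandard_cons_iff {i : Fin 3} {l : List (Fin 3)} :
    IsStandard c (i :: l) ↔ IsStandard c l ∧ l.head? ≠ some i ∧
      (i = 0 → ¬ alt 1 0 (2 * c) <+: l) ∧ (i = 1 → ¬ alt 2 1 (2 * c) <+: l) := by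
  simp only [IsStandard, leadingWords, List.infix_cons_iff, alt_succ, List.mem_cons,
    List.not_mem_nil, or_false, forall_eq_or_imp, forall_eq, not_or, List.cons_prefix_cons,
    List.singleton_prefix_iff_head?_eq_some]
  fin_cases i <;> simp <;> tauto

theorem isStandard_alt (hc : 0 < c) {p q : Fin 3} (hqp : q < p) {n : ℕ}
    (hn : n ≤ 2 * c + 1) : IsStandard c (alt p q n) := by
  intro u hu h
  simp only [leadingWords, List.mem_cons, List.not_mem_nil, or_false] at hu
  obtain ⟨c, rfl⟩ := Nat.exists_eq_add_of_lt hc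
  rcases hu with rfl | rfl | rfl | rfl | rfl
  iterate 3
    rcases eq_alt_of_infix h with h | h <;> simp [alt_succ] at h <;>
      obtain ⟨rfl, rfl⟩ := h <;> exact absurd hqp (by decide)
  all_goals
    obtain rfl : n = 2 * (0 + c + 1) + 1 := by have := h.length_le; simp at this; omega
    have h' := h.eq_of_length (by simp)
    simp only [alt_succ, show 2 * (0 + c + 1) = 2 * c + 1 + 1 by ring, List.cons.injEq] at h'
    obtain ⟨rfl, rfl, -⟩ := h'
    exact absurd hqp (by decide)

theorem eq_of_three_infix_leadingWord {u : List (Fin 3)} (hu : u ∈ leadingWords c)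
    {v w z : Fin 3} (h : [v, w, z] <:+: u) : v = z := by
  simp only [leadingWords, List.mem_cons, List.not_mem_nil, or_false] at hu
  rcases hu with rfl | rfl | rfl | rfl | rfl
  iterate 3 exact absurd h.length_le (by simp)
  all_goals exact eq_of_three_infix_alt h

theorem IsStandard.append_cons {a t : List (Fin 3)} {w : Fin 3} (ha : IsStandard c (a ++ [w]))
    (ht : IsStandard c (w :: t)) (hat : ∀ v ∈ a.getLast?, t.head? ≠ some v) :
    IsStandard c (a ++ w :: t) := by
  intro u hu h
  rw [← List.singleton_append, ← List.append_assoc, List.infix_append_iff] at h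
  rcases h with h | h | ⟨u₁, u₂, rfl, h₁, h₂⟩
  · exact ha u hu h
  · exact ht u hu (h.trans (List.suffix_cons w t).isInfix)
  rcases List.suffix_concat_iff.mp h₁ with rfl | ⟨s, rfl, hs⟩
  · exact ht _ hu (h₂.isInfix.trans (List.suffix_cons w t).isInfix)
  rcases u₂ with _ | ⟨z, u₂⟩
  · exact ha _ hu (by simpa using h₁.isInfix)
  rcases List.eq_nil_or_concat s with rfl | ⟨s, v, rfl⟩
  · exact ht _ hu (List.cons_prefix_cons.mpr ⟨rfl, h₂⟩).isInfix
  simp only [List.concat_eq_append] at hs hu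
  obtain rfl : v = z := eq_of_three_infix_leadingWord hu (w := w) ⟨s, u₂, by simp⟩
  obtain ⟨pre, rfl⟩ := hs
  obtain ⟨post, rfl⟩ := h₂
  exact hat v (by simp) (by simp)

theorem IsStandard.head?_ne_of_getLast? {a r : List (Fin 3)} (h : IsStandard c (a ++ r))
    {v : Fin 3} (hv : a.getLast? = some v) : r.head? ≠ some v := by
  intro hr
  obtain ⟨a, rfl⟩ := List.getLast?_eq_some_iff.mp hv
  obtain ⟨r, rfl⟩ := List.head?_eq_some_iff.mp hr
  exact h [v, v] (by fin_cases v <;> simp [leadingWords]) ⟨a, r, by simp⟩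

theorem IsStandard.head?_ne_of_alt_append {p q : Fin 3} {t : List (Fin 3)}
    (h : IsStandard c (alt p q (2 * c + 1) ++ t)) (hqp : alt q p (2 * c + 1) ∈ leadingWords c) :
    t.head? ≠ some q := by
  intro ht
  obtain ⟨t, rfl⟩ := List.head?_eq_some_iff.mp ht
  refine h _ hqp ⟨[p], t, ?_⟩
  simp [alt_two_mul_succ, alt_two_mul_append_cons_cons]

theorem isStandard_alt_two_mul_append (hc : 0 < c) {p q : Fin 3} (hqp : q < p)
    {t : List (Fin 3)} (ht : IsStandard c (q :: t)) (hp : t.head? ≠ some p) :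
    IsStandard c (alt p q (2 * c) ++ t) := by
  rw [alt_two_mul_of_pos _ _ hc, show alt p q (2 * (c - 1)) ++ [p, q] ++ t =
    (alt p q (2 * (c - 1)) ++ [p]) ++ q :: t by simp]
  refine IsStandard.append_cons ?_ ht (by simpa using fun h => hp h)
  simpa [alt_two_mul_of_pos _ _ hc] using isStandard_alt hc hqp (n := 2 * c) (by omega)

theorem isStandard_alt_two_mul_append_cons (hc : 0 < c) {p q : Fin 3} (hqp : q < p)
    {r : List (Fin 3)} (hr : IsStandard c (p :: r)) (hq : r.head? ≠ some q) :
    IsStandard c (alt p q (2 * c) ++ p :: r) := by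
  refine IsStandard.append_cons ?_ hr ?_
  · rw [← alt_two_mul_succ]
    exact isStandard_alt hc hqp le_rfl
  · simpa [alt_two_mul_of_pos _ _ hc] using hq

end Standard

section NormalForm

def nfCons2 (l : List (Fin 3)) : List (Fin 3) :=
  if l.head? = some 2 then l.tail else 2 :: l

def nfCons1 (c : ℕ) (l : List (Fin 3)) : List (Fin 3) :=
  if l.head? = some 1 then l.tail
  else if alt 2 1 (2 * c) <+: l then alt 2 1 (2 * c) ++ nfCons2 (l.drop (2 * c))
  else 1 :: l

def nfCons0 (c : ℕ) (l : List (Fin 3)) : List (Fin 3) :=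
  if l.head? = some 0 then l.tail
  else if alt 1 0 (2 * c) <+: l then alt 1 0 (2 * c) ++ nfCons1 c (l.drop (2 * c))
  else 0 :: l

/-- Besides cancelling `sᵢ sᵢ`, the only rewrites are `s₂ (s₃s₂)^c = (s₃s₂)^c s₃` and
`s₁ (s₂s₁)^c = (s₂s₁)^c s₂`, after which the moved letter acts on the rest of the word. -/
def nfCons (c : ℕ) : Fin 3 → List (Fin 3) → List (Fin 3) := ![nfCons0 c, nfCons1 c, nfCons2]

variable {c : ℕ}

@[simp] theorem nfCons2_cons (t : List (Fin 3)) : nfCons2 (2 :: t) = t := by simp [nfCons2]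

@[simp] theorem nfCons1_cons (t : List (Fin 3)) : nfCons1 c (1 :: t) = t := by simp [nfCons1]

@[simp] theorem nfCons0_cons (t : List (Fin 3)) : nfCons0 c (0 :: t) = t := by simp [nfCons0]

theorem nfCons2_of_head? {l : List (Fin 3)} (h : l.head? ≠ some 2) : nfCons2 l = 2 :: l := by
  simp [nfCons2, h]

theorem nfCons1_of_not {l : List (Fin 3)} (h₁ : l.head? ≠ some 1)
    (h₂ : ¬ alt 2 1 (2 * c) <+: l) : nfCons1 c l = 1 :: l := by
  simp [nfCons1, h₁, h₂]

theorem nfCons0_of_not {l : List (Fin 3)} (h₀ : l.head? ≠ some 0)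
    (h₁ : ¬ alt 1 0 (2 * c) <+: l) : nfCons0 c l = 0 :: l := by
  simp [nfCons0, h₀, h₁]

theorem nfCons1_alt_append (hc : 0 < c) (t : List (Fin 3)) :
    nfCons1 c (alt 2 1 (2 * c) ++ t) = alt 2 1 (2 * c) ++ nfCons2 t := by
  have hhead : (alt 2 1 (2 * c) ++ t).head? = some 2 := by
    simp [List.head?_append, head?_alt (show 0 < 2 * c by omega)]
  simp [nfCons1, hhead, List.drop_left']

theorem nfCons0_alt_append (hc : 0 < c) (t : List (Fin 3)) :
    nfCons0 c (alt 1 0 (2 * c) ++ t) = alt 1 0 (2 * c) ++ nfCons1 c t := by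
  have hhead : (alt 1 0 (2 * c) ++ t).head? = some 1 := by
    simp [List.head?_append, head?_alt (show 0 < 2 * c by omega)]
  simp [nfCons0, hhead, List.drop_left']

theorem head?_nfCons1_of_alt_prefix (hc : 0 < c) {l : List (Fin 3)}
    (h : alt 2 1 (2 * c) <+: l) : (nfCons1 c l).head? = some 2 := by
  obtain ⟨t, rfl⟩ := h
  rw [nfCons1_alt_append hc]
  exact head?_of_alt_prefix (by omega) (List.prefix_append _ _)

theorem nfCons_of_isStandard_cons {i : Fin 3} {t : List (Fin 3)} (h : IsStandard c (i :: t)) :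
    nfCons c i t = i :: t := by
  obtain ⟨-, hi, h₀, h₁⟩ := isStandard_cons_iff.mp h
  fin_cases i
  · exact nfCons0_of_not hi (h₀ rfl)
  · exact nfCons1_of_not hi (h₁ rfl)
  · exact nfCons2_of_head? hi

theorem isStandard_nfCons2 {l : List (Fin 3)} (h : IsStandard c l) :
    IsStandard c (nfCons2 l) := by
  by_cases hl : l.head? = some 2
  · obtain ⟨t, rfl⟩ := List.head?_eq_some_iff.mp hl
    simpa using h.suffix (List.suffix_cons _ _)
  · rw [nfCons2_of_head? hl]
    exact isStandard_cons_iff.mpr ⟨h, hl, by simp, by simp⟩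

theorem isStandard_nfCons1 (hc : 0 < c) {l : List (Fin 3)} (h : IsStandard c l) :
    IsStandard c (nfCons1 c l) := by
  by_cases hl : l.head? = some 1
  · obtain ⟨t, rfl⟩ := List.head?_eq_some_iff.mp hl
    simpa using h.suffix (List.suffix_cons _ _)
  by_cases htr : alt 2 1 (2 * c) <+: l
  swap
  · rw [nfCons1_of_not hl htr]
    exact isStandard_cons_iff.mpr ⟨h, hl, by simp, fun _ => htr⟩
  obtain ⟨r, rfl⟩ := htr
  rw [nfCons1_alt_append hc]
  by_cases hr : r.head? = some 2
  · obtain ⟨t, rfl⟩ := List.head?_eq_some_iff.mp hr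
    rw [nfCons2_cons]
    have h' : IsStandard c (alt 2 1 (2 * c + 1) ++ t) := by simpa [alt_two_mul_succ] using h
    have ht2 : t.head? ≠ some 2 := h'.head?_ne_of_getLast? (by simp [alt_two_mul_succ])
    have ht1 : t.head? ≠ some 1 := h'.head?_ne_of_alt_append (by simp [leadingWords])
    refine isStandard_alt_two_mul_append hc (by decide) ?_ ht2
    exact isStandard_cons_iff.mpr ⟨h'.suffix (List.suffix_append _ _), ht1, by simp,
      fun _ hp => ht2 (head?_of_alt_prefix (by omega) hp)⟩
  · rw [nfCons2_of_head? hr]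
    refine isStandard_alt_two_mul_append_cons hc (by decide) ?_
      (h.head?_ne_of_getLast? (by simp [alt_two_mul_of_pos _ _ hc]))
    exact isStandard_cons_iff.mpr ⟨h.suffix (List.suffix_append _ _), hr, by simp, by simp⟩

theorem isStandard_nfCons0 (hc : 0 < c) {l : List (Fin 3)} (h : IsStandard c l) :
    IsStandard c (nfCons0 c l) := by
  by_cases hl : l.head? = some 0
  · obtain ⟨t, rfl⟩ := List.head?_eq_some_iff.mp hl
    simpa using h.suffix (List.suffix_cons _ _)
  by_cases htr : alt 1 0 (2 * c) <+: l
  swap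
  · rw [nfCons0_of_not hl htr]
    exact isStandard_cons_iff.mpr ⟨h, hl, fun _ => htr, by simp⟩
  obtain ⟨r, rfl⟩ := htr
  rw [nfCons0_alt_append hc]
  have hr : IsStandard c r := h.suffix (List.suffix_append _ _)
  have hr0 : r.head? ≠ some 0 := h.head?_ne_of_getLast? (by simp [alt_two_mul_of_pos _ _ hc])
  by_cases hr1 : r.head? = some 1
  · obtain ⟨t, rfl⟩ := List.head?_eq_some_iff.mp hr1
    rw [nfCons1_cons]
    have h' : IsStandard c (alt 1 0 (2 * c + 1) ++ t) := by simpa [alt_two_mul_succ] using h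
    have ht1 : t.head? ≠ some 1 := h'.head?_ne_of_getLast? (by simp [alt_two_mul_succ])
    have ht0 : t.head? ≠ some 0 := h'.head?_ne_of_alt_append (by simp [leadingWords])
    refine isStandard_alt_two_mul_append hc (by decide) ?_ ht1
    exact isStandard_cons_iff.mpr ⟨h'.suffix (List.suffix_append _ _), ht0,
      fun _ hp => ht1 (head?_of_alt_prefix (by omega) hp), by simp⟩
  by_cases htr : alt 2 1 (2 * c) <+: r
  · have hhead := head?_nfCons1_of_alt_prefix hc htr
    refine isStandard_alt_two_mul_append hc (by decide) ?_ (by simp [hhead])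
    exact isStandard_cons_iff.mpr ⟨isStandard_nfCons1 hc hr, by simp [hhead],
      fun _ hp => by simp [head?_of_alt_prefix (by omega) hp] at hhead, by simp⟩
  · rw [nfCons1_of_not hr1 htr]
    exact isStandard_alt_two_mul_append_cons hc (by decide)
      (isStandard_cons_iff.mpr ⟨hr, hr1, by simp, fun _ => htr⟩) hr0

theorem nfCons2_nfCons2 {l : List (Fin 3)} (h : IsStandard c l) : nfCons2 (nfCons2 l) = l := by
  by_cases hl : l.head? = some 2
  · obtain ⟨t, rfl⟩ := List.head?_eq_some_iff.mp hl
    rw [nfCons2_cons]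
    exact nfCons_of_isStandard_cons (i := 2) h
  · rw [nfCons2_of_head? hl, nfCons2_cons]

theorem nfCons1_nfCons1 (hc : 0 < c) {l : List (Fin 3)} (h : IsStandard c l) :
    nfCons1 c (nfCons1 c l) = l := by
  by_cases hl : l.head? = some 1
  · obtain ⟨t, rfl⟩ := List.head?_eq_some_iff.mp hl
    rw [nfCons1_cons]
    exact nfCons_of_isStandard_cons (i := 1) h
  by_cases htr : alt 2 1 (2 * c) <+: l
  · obtain ⟨r, rfl⟩ := htr
    rw [nfCons1_alt_append hc, nfCons1_alt_append hc,
      nfCons2_nfCons2 (h.suffix (List.suffix_append _ _))]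
  · rw [nfCons1_of_not hl htr, nfCons1_cons]

theorem nfCons0_nfCons0 (hc : 0 < c) {l : List (Fin 3)} (h : IsStandard c l) :
    nfCons0 c (nfCons0 c l) = l := by
  by_cases hl : l.head? = some 0
  · obtain ⟨t, rfl⟩ := List.head?_eq_some_iff.mp hl
    rw [nfCons0_cons]
    exact nfCons_of_isStandard_cons (i := 0) h
  by_cases htr : alt 1 0 (2 * c) <+: l
  · obtain ⟨r, rfl⟩ := htr
    rw [nfCons0_alt_append hc, nfCons0_alt_append hc,
      nfCons1_nfCons1 hc (h.suffix (List.suffix_append _ _))]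
  · rw [nfCons0_of_not hl htr, nfCons0_cons]

theorem isStandard_nfCons (hc : 0 < c) (i : Fin 3) {l : List (Fin 3)} (h : IsStandard c l) :
    IsStandard c (nfCons c i l) := by
  fin_cases i
  exacts [isStandard_nfCons0 hc h, isStandard_nfCons1 hc h, isStandard_nfCons2 h]

theorem nfCons_nfCons (hc : 0 < c) (i : Fin 3) {l : List (Fin 3)} (h : IsStandard c l) :
    nfCons c i (nfCons c i l) = l := by
  fin_cases i
  exacts [nfCons0_nfCons0 hc h, nfCons1_nfCons1 hc h, nfCons2_nfCons2 h]

end NormalForm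

section GroupRelations

variable {G : Type*} [Group G] {c : ℕ}

theorem prod_alt_two_mul (a b : G) (n : ℕ) : (alt a b (2 * n)).prod = (a * b) ^ n := by
  induction n with
  | zero => simp
  | succ n ih =>
    rw [show 2 * (n + 1) = 2 * n + 2 by ring, alt_two_mul_add_two]
    simp [ih, pow_succ]

theorem prod_alt_mul_eq_mul_prod_alt {a b : G} (ha : a * a = 1) (hb : b * b = 1)
    (hab : (a * b) ^ (2 * c + 1) = 1) :
    (alt b a (2 * c)).prod * b = a * (alt b a (2 * c)).prod := by
  have braid : (alt b a (2 * c + 1)).prod = (alt a b (2 * c + 1)).prod := by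
    have hinv : ((a * b) ^ c)⁻¹ = (b * a) ^ c := by
      rw [← inv_pow, mul_inv_rev, inv_eq_of_mul_eq_one_right ha, inv_eq_of_mul_eq_one_right hb]
    rw [alt_two_mul_succ, alt_two_mul_succ, List.prod_append, List.prod_append,
      prod_alt_two_mul, prod_alt_two_mul, ← hinv, List.prod_singleton, List.prod_singleton]
    rw [pow_succ, two_mul, pow_add, ← mul_assoc, ← hb] at hab
    rw [inv_mul_eq_iff_eq_mul, ← mul_assoc]
    exact (mul_right_cancel hab).symm
  rw [alt_two_mul_succ b a, alt_succ a b] at braid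
  simpa using braid

variable {g : Fin 3 → G}

theorem prod_map_nfCons2 (h2 : g 2 * g 2 = 1) (l : List (Fin 3)) :
    ((nfCons2 l).map g).prod = g 2 * (l.map g).prod := by
  by_cases hl : l.head? = some 2
  · obtain ⟨t, rfl⟩ := List.head?_eq_some_iff.mp hl
    simp [← mul_assoc, h2]
  · simp [nfCons2_of_head? hl]

theorem prod_map_nfCons1 (hc : 0 < c) (hg : ∀ i, g i * g i = 1)
    (h12 : (g 1 * g 2) ^ (2 * c + 1) = 1) (l : List (Fin 3)) :
    ((nfCons1 c l).map g).prod = g 1 * (l.map g).prod := by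
  by_cases hl : l.head? = some 1
  · obtain ⟨t, rfl⟩ := List.head?_eq_some_iff.mp hl
    simp [← mul_assoc, hg 1]
  by_cases htr : alt 2 1 (2 * c) <+: l
  · obtain ⟨r, rfl⟩ := htr
    simp only [nfCons1_alt_append hc, List.map_append, List.prod_append, map_alt,
      prod_map_nfCons2 (hg 2), ← mul_assoc, prod_alt_mul_eq_mul_prod_alt (hg 1) (hg 2) h12]
  · simp [nfCons1_of_not hl htr]

theorem prod_map_nfCons0 (hc : 0 < c) (hg : ∀ i, g i * g i = 1)
    (h01 : (g 0 * g 1) ^ (2 * c + 1) = 1) (h12 : (g 1 * g 2) ^ (2 * c + 1) = 1)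
    (l : List (Fin 3)) : ((nfCons0 c l).map g).prod = g 0 * (l.map g).prod := by
  by_cases hl : l.head? = some 0
  · obtain ⟨t, rfl⟩ := List.head?_eq_some_iff.mp hl
    simp [← mul_assoc, hg 0]
  by_cases htr : alt 1 0 (2 * c) <+: l
  · obtain ⟨r, rfl⟩ := htr
    simp only [nfCons0_alt_append hc, List.map_append, List.prod_append, map_alt,
      prod_map_nfCons1 hc hg h12, ← mul_assoc, prod_alt_mul_eq_mul_prod_alt (hg 0) (hg 1) h01]
  · simp [nfCons0_of_not hl htr]

end GroupRelations

section BraidDynamics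

variable {α : Type*}

/-- The shape shared by `(nfCons0 c, nfCons1 c)` and `(nfCons1 c, nfCons2)`, with `f`, `g`
playing left multiplication by `x`, `y`. -/
structure BraidPair (x y : α) (c : ℕ) (f g : List α → List α) : Prop where
  pos : 0 < c
  ne : x ≠ y
  f_cons : ∀ t, f (x :: t) = t
  g_cons : ∀ t, g (y :: t) = t
  f_alt_append : ∀ t, f (alt y x (2 * c) ++ t) = alt y x (2 * c) ++ g t
  f_of_not : ∀ l, l.head? ≠ some x → ¬ alt y x (2 * c) <+: l → f l = x :: l
  g_of_head? : ∀ l, l.head? = some x → g l = y :: l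

namespace BraidPair

variable {x y : α} {c : ℕ} {f g : List α → List α} (h : BraidPair x y c f g)
include h

theorem f_of_head?_ne {s : List α} (hsx : s.head? ≠ some x) (hsy : s.head? ≠ some y) :
    f s = x :: s :=
  h.f_of_not s hsx fun hp => hsy (head?_of_alt_prefix (by have := h.pos; omega) hp)

theorem g_alt_append {L : ℕ} {r : List α} (hL : 0 < L) :
    g (alt x y L ++ r) = alt y x (L + 1) ++ r :=
  h.g_of_head? _ (by simp [List.head?_append, head?_alt hL])

theorem comp_alt_append_down (L : ℕ) (r : List α) :
    (f ∘ g) (alt y x (L + 2) ++ r) = alt y x L ++ r := by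
  simp [alt_succ, h.g_cons, h.f_cons]

theorem comp_alt_append_two_mul (r : List α) :
    (f ∘ g) (alt x y (2 * c) ++ r) = alt y x (2 * c) ++ r := by
  rw [comp_apply, h.g_alt_append (by have := h.pos; omega), alt_two_mul_succ,
    List.append_assoc, List.singleton_append, h.f_alt_append, h.g_cons]

theorem comp_alt_append_two_mul_sub_one (r : List α) :
    (f ∘ g) (alt x y (2 * c - 1) ++ r) = alt y x (2 * c) ++ g r := by
  have := h.pos
  rw [comp_apply, h.g_alt_append (by omega), Nat.sub_add_cancel (by omega), h.f_alt_append]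

theorem iterate_comp_alt_append_down (j L : ℕ) (r : List α) :
    (f ∘ g)^[j] (alt y x (L + 2 * j) ++ r) = alt y x L ++ r := by
  induction j generalizing L with
  | zero => rfl
  | succ j ih =>
    rw [iterate_succ_apply, show L + 2 * (j + 1) = L + 2 * j + 2 by ring,
      h.comp_alt_append_down, ih]

theorem isPeriodicPt_alt_append_of_top {e j : ℕ} {r : List α} (hj : j ≤ c)
    (htop : IsPeriodicPt (f ∘ g) (2 * c + 1) (alt y x (2 * c + e) ++ r)) :
    IsPeriodicPt (f ∘ g) (2 * c + 1) (alt y x (2 * j + e) ++ r) := by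
  have := htop.apply_iterate (c - j)
  rwa [show 2 * c + e = 2 * j + e + 2 * (c - j) by omega,
    h.iterate_comp_alt_append_down] at this

section Tail

variable {r : List α} (hrx : r.head? ≠ some x) (hry : r.head? ≠ some y)
include hrx hry

theorem comp_alt_append_up {L : ℕ} (hL : L + 2 ≤ 2 * c) (hg : 0 < L ∨ g r = y :: r) :
    (f ∘ g) (alt x y L ++ r) = alt x y (L + 2) ++ r := by
  have hgL : g (alt x y L ++ r) = alt y x (L + 1) ++ r := by
    rcases Nat.eq_zero_or_pos L with rfl | hL0
    · exact hg.resolve_left (lt_irrefl 0)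
    · exact h.g_alt_append hL0
  rw [comp_apply, hgL, h.f_of_not]
  · rfl
  · simpa [alt_succ] using h.ne.symm
  · intro hp
    rcases head?_of_alt_prefix_alt_append (by omega) hp with hr | hr
    exacts [hry hr, hrx hr]

theorem iterate_comp_alt_append_up (j : ℕ) {L : ℕ} (hL : L + 2 * j ≤ 2 * c)
    (hg : 0 < L ∨ g r = y :: r) : (f ∘ g)^[j] (alt x y L ++ r) = alt x y (L + 2 * j) ++ r := by
  induction j generalizing L with
  | zero => rfl
  | succ j ih =>
    rw [iterate_succ_apply, h.comp_alt_append_up hrx hry (by omega) hg,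
      ih (by omega) (.inl (by omega))]
    ring_nf

theorem iterate_comp_cons : (f ∘ g)^[c] (x :: r) = alt y x (2 * c) ++ g r := by
  have := h.pos
  conv_lhs => rw [show c = 1 + (c - 1) by omega]
  rw [iterate_add_apply, show x :: r = alt x y 1 ++ r from rfl,
    h.iterate_comp_alt_append_up hrx hry _ (by omega) (.inl one_pos),
    show 1 + 2 * (c - 1) = 2 * c - 1 by omega, iterate_one, h.comp_alt_append_two_mul_sub_one]

theorem iterate_comp_of_untwisted (hg : g r = y :: r) :
    (f ∘ g)^[c] r = alt x y (2 * c) ++ r := by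
  simpa using h.iterate_comp_alt_append_up hrx hry c (L := 0) (by omega) (.inr hg)

theorem isPeriodicPt_of_untwisted (hg : g r = y :: r) : IsPeriodicPt (f ∘ g) (2 * c + 1) r := by
  have hup := h.iterate_comp_of_untwisted hrx hry hg
  show (f ∘ g)^[2 * c + 1] r = r
  rw [show 2 * c + 1 = c + (1 + c) by ring, iterate_add_apply, iterate_add_apply, hup,
    iterate_one, h.comp_alt_append_two_mul]
  simpa using h.iterate_comp_alt_append_down c 0 r

theorem isPeriodicPt_cons_of_untwisted (hg : g r = y :: r) :
    IsPeriodicPt (f ∘ g) (2 * c + 1) (x :: r) := by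
  show (f ∘ g)^[2 * c + 1] (x :: r) = x :: r
  rw [show 2 * c + 1 = 1 + (c + c) by ring, iterate_add_apply, iterate_add_apply,
    h.iterate_comp_cons hrx hry, hg, ← List.singleton_append, ← List.append_assoc,
    ← alt_two_mul_succ, add_comm, h.iterate_comp_alt_append_down c 1 r, iterate_one]
  simp [alt_succ, h.g_cons, h.f_of_head?_ne hrx hry]

theorem isPeriodicPt_alt_append_of_bottom {L j : ℕ} (hL : L + 2 * j ≤ 2 * c)
    (hg : 0 < L ∨ g r = y :: r) (hbot : IsPeriodicPt (f ∘ g) (2 * c + 1) (alt x y L ++ r)) :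
    IsPeriodicPt (f ∘ g) (2 * c + 1) (alt x y (L + 2 * j) ++ r) := by
  simpa only [h.iterate_comp_alt_append_up hrx hry j hL hg] using hbot.apply_iterate j

theorem isPeriodicPt_alt_append_of_untwisted (hg : g r = y :: r) {a : List α} {n : ℕ}
    (ha : a = alt x y n ∧ n < 2 * c + 1 ∨ a = alt y x n ∧ n ≤ 2 * c + 1) :
    IsPeriodicPt (f ∘ g) (2 * c + 1) (a ++ r) := by
  have hr := h.isPeriodicPt_of_untwisted hrx hry hg
  have hxr := h.isPeriodicPt_cons_of_untwisted hrx hry hg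
  obtain ⟨j, rfl | rfl⟩ := Nat.even_or_odd' n <;> rcases ha with ⟨rfl, hn⟩ | ⟨rfl, hn⟩
  · simpa using h.isPeriodicPt_alt_append_of_bottom hrx hry (L := 0) (j := j) (by omega)
      (.inr hg) (by simpa using hr)
  · have htop := hr.apply_iterate (c + 1)
    rw [iterate_succ_apply', h.iterate_comp_of_untwisted hrx hry hg,
      h.comp_alt_append_two_mul] at htop
    simpa using h.isPeriodicPt_alt_append_of_top (e := 0) (by omega) (by simpa using htop)
  · simpa [add_comm] using h.isPeriodicPt_alt_append_of_bottom hrx hry (L := 1) (j := j)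
      (by omega) (.inl one_pos) hxr
  · have htop := hxr.apply_iterate c
    rw [h.iterate_comp_cons hrx hry, hg, ← List.singleton_append, ← List.append_assoc,
      ← alt_two_mul_succ] at htop
    exact h.isPeriodicPt_alt_append_of_top (e := 1) (by omega) htop

end Tail

/-- In the twisted case `g` does not prepend `y` to the tail `r` but replaces it by another tail;
for `nfCons1` this is `s₂ (s₃s₂)^c w = (s₃s₂)^c s₃ w`. -/
theorem isPeriodicPt_of_twisted (hgx : (g r).head? ≠ some x) (hgy : (g r).head? ≠ some y)
    (hgg : g (g r) = r) : IsPeriodicPt (f ∘ g) (2 * c + 1) r := by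
  show (f ∘ g)^[2 * c + 1] r = r
  rw [show 2 * c + 1 = c + (c + 1) by ring, iterate_add_apply, iterate_add_apply, iterate_one,
    comp_apply, h.f_of_head?_ne hgx hgy, h.iterate_comp_cons hgx hgy, hgg]
  simpa using h.iterate_comp_alt_append_down c 0 r

theorem isPeriodicPt_alt_append_of_twisted {r : List α} (hrx : r.head? ≠ some x)
    (hry : r.head? ≠ some y) (hgx : (g r).head? ≠ some x) (hgy : (g r).head? ≠ some y)
    (hgg : g (g r) = r) {a : List α} {n : ℕ}
    (ha : a = alt x y n ∧ n < 2 * c + 1 ∨ a = alt y x n ∧ n ≤ 2 * c + 1)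
    (hlast : a.getLast? ≠ some y) : IsPeriodicPt (f ∘ g) (2 * c + 1) (a ++ r) := by
  have hr := h.isPeriodicPt_of_twisted hgx hgy hgg
  have hxr : IsPeriodicPt (f ∘ g) (2 * c + 1) (x :: r) := by
    have := (h.isPeriodicPt_of_twisted (r := g r) (by rwa [hgg]) (by rwa [hgg])
      (by rw [hgg])).apply_iterate 1
    rwa [iterate_one, comp_apply, hgg, h.f_of_head?_ne hrx hry] at this
  obtain ⟨j, rfl | rfl⟩ := Nat.even_or_odd' n <;> rcases ha with ⟨rfl, hn⟩ | ⟨rfl, hn⟩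
  · rcases Nat.eq_zero_or_pos j with rfl | hj
    · simpa using hr
    · exact absurd (by simp [alt_two_mul_of_pos _ _ hj]) hlast
  · have htop := hr.apply_iterate (c + 1)
    rw [iterate_succ_apply, comp_apply, h.f_of_head?_ne hgx hgy, h.iterate_comp_cons hgx hgy,
      hgg] at htop
    simpa using h.isPeriodicPt_alt_append_of_top (e := 0) (by omega) (by simpa using htop)
  · simpa [add_comm] using h.isPeriodicPt_alt_append_of_bottom hrx hry (L := 1) (j := j)
      (by omega) (.inl one_pos) hxr
  · exact absurd (by simp [alt_two_mul_succ]) hlast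

end BraidPair

end BraidDynamics

section Braid

variable {c : ℕ}

theorem braidPair_nfCons0_nfCons1 (hc : 0 < c) : BraidPair 0 1 c (nfCons0 c) (nfCons1 c) where
  pos := hc
  ne := by decide
  f_cons := nfCons0_cons
  g_cons := nfCons1_cons
  f_alt_append := nfCons0_alt_append hc
  f_of_not _ := nfCons0_of_not
  g_of_head? _ hl := nfCons1_of_not (by simp [hl])
    fun hp => by simp [head?_of_alt_prefix (by omega) hp] at hl

theorem braidPair_nfCons1_nfCons2 (hc : 0 < c) : BraidPair 1 2 c (nfCons1 c) nfCons2 where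
  pos := hc
  ne := by decide
  f_cons := nfCons1_cons
  g_cons := nfCons2_cons
  f_alt_append := nfCons1_alt_append hc
  f_of_not _ := nfCons1_of_not
  g_of_head? _ hl := nfCons2_of_head? (by simp [hl])

theorem isPeriodicPt_nfCons0_comp_nfCons1 (hc : 0 < c) {l : List (Fin 3)}
    (h : IsStandard c l) : IsPeriodicPt (nfCons0 c ∘ nfCons1 c) (2 * c + 1) l := by
  obtain ⟨a, r, n, rfl, hr0, hr1, ha⟩ := exists_alt_append (x := 0) (y := 1) (m := 2 * c + 1) l
    (h _ (by simp [leadingWords])) (h _ (by simp [leadingWords])) (h _ (by simp [leadingWords]))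
  have hr : IsStandard c r := h.suffix (List.suffix_append _ _)
  by_cases htr : alt 2 1 (2 * c) <+: r
  · have hhead := head?_nfCons1_of_alt_prefix hc htr
    refine (braidPair_nfCons0_nfCons1 hc).isPeriodicPt_alt_append_of_twisted hr0 hr1
      (by simp [hhead]) (by simp [hhead]) (nfCons1_nfCons1 hc hr) ha fun hlast => ?_
    obtain ⟨a, rfl⟩ := List.getLast?_eq_some_iff.mp hlast
    obtain ⟨t, rfl⟩ := htr
    exact h (alt 1 2 (2 * c + 1)) (by simp [leadingWords]) ⟨a, t, by simp [alt_succ]⟩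
  · exact (braidPair_nfCons0_nfCons1 hc).isPeriodicPt_alt_append_of_untwisted hr0 hr1
      (nfCons1_of_not hr1 htr) ha

theorem isPeriodicPt_nfCons1_comp_nfCons2 (hc : 0 < c) {l : List (Fin 3)}
    (h : IsStandard c l) : IsPeriodicPt (nfCons1 c ∘ nfCons2) (2 * c + 1) l := by
  obtain ⟨a, r, n, rfl, hr1, hr2, ha⟩ := exists_alt_append (x := 1) (y := 2) (m := 2 * c + 1) l
    (h _ (by simp [leadingWords])) (h _ (by simp [leadingWords])) (h _ (by simp [leadingWords]))
  exact (braidPair_nfCons1_nfCons2 hc).isPeriodicPt_alt_append_of_untwisted hr1 hr2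
    (nfCons2_of_head? hr2) ha

end Braid

section Action

variable {c : ℕ}

def wRels (c : ℕ) : Set (FreeGroup (Fin 3)) :=
  {FreeGroup.of 0 ^ 2, FreeGroup.of 1 ^ 2, FreeGroup.of 2 ^ 2,
    (FreeGroup.of 0 * FreeGroup.of 1) ^ (2 * c + 1),
    (FreeGroup.of 1 * FreeGroup.of 2) ^ (2 * c + 1)}

theorem lift_eq_one_of_mem_wRels {G : Type*} [Group G] {g : Fin 3 → G}
    (hg : ∀ i, g i * g i = 1) (h01 : (g 0 * g 1) ^ (2 * c + 1) = 1)
    (h12 : (g 1 * g 2) ^ (2 * c + 1) = 1) : ∀ r ∈ wRels c, FreeGroup.lift g r = 1 := by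
  simp only [wRels, Set.mem_insert_iff, Set.mem_singleton_iff]
  rintro r (rfl | rfl | rfl | rfl | rfl) <;> simp [pow_two, hg, h01, h12]

theorem of_mul_self (i : Fin 3) :
    (PresentedGroup.of i : PresentedGroup (wRels c)) * PresentedGroup.of i = 1 := by
  have := PresentedGroup.one_of_mem (rels := wRels c) (x := FreeGroup.of i ^ 2)
    (by fin_cases i <;> simp [wRels])
  rwa [map_pow, pow_two] at this

theorem of_mul_of_pow_eq_one {i j : Fin 3}
    (hij : (FreeGroup.of i * FreeGroup.of j) ^ (2 * c + 1) ∈ wRels c) :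
    ((PresentedGroup.of i : PresentedGroup (wRels c)) * PresentedGroup.of j) ^ (2 * c + 1) = 1 := by
  have := PresentedGroup.one_of_mem hij
  rwa [map_pow, map_mul] at this

theorem prod_map_nfCons {G : Type*} [Group G] {g : Fin 3 → G} (hc : 0 < c)
    (hg : ∀ i, g i * g i = 1) (h01 : (g 0 * g 1) ^ (2 * c + 1) = 1)
    (h12 : (g 1 * g 2) ^ (2 * c + 1) = 1) (i : Fin 3) (l : List (Fin 3)) :
    ((nfCons c i l).map g).prod = g i * (l.map g).prod := by
  fin_cases i
  exacts [prod_map_nfCons0 hc hg h01 h12 l, prod_map_nfCons1 hc hg h12 l,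
    prod_map_nfCons2 (hg 2) l]

def nfPerm (hc : 0 < c) (i : Fin 3) : Equiv.Perm {l : List (Fin 3) // IsStandard c l} :=
  Involutive.toPerm (fun w => ⟨nfCons c i w.1, isStandard_nfCons hc i w.2⟩)
    fun w => Subtype.ext (nfCons_nfCons hc i w.2)

theorem nfPerm_mul_self (hc : 0 < c) (i : Fin 3) : nfPerm hc i * nfPerm hc i = 1 :=
  Equiv.ext fun w => Subtype.ext (nfCons_nfCons hc i w.2)

theorem nfPerm_mul_pow_eq_one (hc : 0 < c) {i j : Fin 3}
    (h : ∀ l, IsStandard c l → IsPeriodicPt (nfCons c i ∘ nfCons c j) (2 * c + 1) l) :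
    (nfPerm hc i * nfPerm hc j) ^ (2 * c + 1) = 1 := by
  refine Equiv.ext fun w => Subtype.ext ?_
  have hsemi : Semiconj Subtype.val (nfPerm hc i * nfPerm hc j) (nfCons c i ∘ nfCons c j) :=
    fun _ => rfl
  rw [Equiv.Perm.coe_pow, hsemi.iterate_right, h w.1 w.2]
  rfl

def nfAction (hc : 0 < c) :
    PresentedGroup (wRels c) →* Equiv.Perm {l : List (Fin 3) // IsStandard c l} :=
  PresentedGroup.toGroup (lift_eq_one_of_mem_wRels (nfPerm_mul_self hc)
    (nfPerm_mul_pow_eq_one hc fun _ => isPeriodicPt_nfCons0_comp_nfCons1 hc)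
    (nfPerm_mul_pow_eq_one hc fun _ => isPeriodicPt_nfCons1_comp_nfCons2 hc))

theorem nfAction_of (hc : 0 < c) (i : Fin 3) : nfAction hc (PresentedGroup.of i) = nfPerm hc i :=
  PresentedGroup.toGroup.of _

theorem prod_map_nfAction (hc : 0 < c) (x : PresentedGroup (wRels c))
    (w : {l : List (Fin 3) // IsStandard c l}) :
    ((nfAction hc x w).1.map PresentedGroup.of).prod = x * (w.1.map PresentedGroup.of).prod := by
  have hgen : ∀ i w, ((nfAction hc (PresentedGroup.of i) w).1.map PresentedGroup.of).prod =
      PresentedGroup.of i * (w.1.map (PresentedGroup.of (rels := wRels c))).prod := fun i w => by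
    rw [nfAction_of]
    exact prod_map_nfCons hc of_mul_self (of_mul_of_pow_eq_one (by simp [wRels]))
      (of_mul_of_pow_eq_one (by simp [wRels])) i w.1
  induction x using PresentedGroup.induction_on with | H z => ?_
  induction z using FreeGroup.induction_on generalizing w with
  | C1 => simp
  | of i => exact hgen i w
  | inv_of i _ =>
    rw [map_inv, map_inv,
      show PresentedGroup.mk _ (FreeGroup.of i) = PresentedGroup.of i from rfl,
      inv_eq_of_mul_eq_one_right (of_mul_self i)]
    exact hgen i w
  | mul x y ihx ihy => rw [map_mul, map_mul, Equiv.Perm.mul_apply, ihx, ihy, mul_assoc]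

theorem nfAction_prod_map_of (hc : 0 < c) {l : List (Fin 3)} (h : IsStandard c l) :
    nfAction hc (l.map PresentedGroup.of).prod ⟨[], isStandard_nil⟩ = ⟨l, h⟩ := by
  induction l with
  | nil => rfl
  | cons i t ih =>
    rw [List.map_cons, List.prod_cons, map_mul, Equiv.Perm.mul_apply,
      ih (h.suffix (List.suffix_cons _ _)), nfAction_of]
    exact Subtype.ext (nfCons_of_isStandard_cons h)

def standardWordEquiv (hc : 0 < c) :
    {l : List (Fin 3) // IsStandard c l} ≃ PresentedGroup (wRels c) where
  toFun w := (w.1.map PresentedGroup.of).prod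
  invFun x := nfAction hc x ⟨[], isStandard_nil⟩
  left_inv w := nfAction_prod_map_of hc w.2
  right_inv x := by simpa using prod_map_nfAction hc x ⟨[], isStandard_nil⟩

end Action

end GrobnerShirshovW

/-- Gröbner–Shirshov basis for `W(2k-1)` (in the sense that the `S`-standard
monomials — words avoiding the leading words of the relations as subwords —
form a linear basis of the group algebra). -/
theorem stmt_16 (k : ℕ) (hk : 2 ≤ k)
    (rels : Set (FreeGroup (Fin 3)))
    (hrels : rels = {FreeGroup.of 0 ^ 2, FreeGroup.of 1 ^ 2, FreeGroup.of 2 ^ 2,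
      (FreeGroup.of 0 * FreeGroup.of 1) ^ (2 * k - 1),
      (FreeGroup.of 1 * FreeGroup.of 2) ^ (2 * k - 1)})
    (Std : List (Fin 3) → Prop)
    (hStd : ∀ l : List (Fin 3), Std l ↔
      ∀ u ∈ ([[0, 0], [1, 1], [2, 2],
          (List.replicate (k - 1) ([0, 1] : List (Fin 3))).flatten ++ [0],
          (List.replicate (k - 1) ([1, 2] : List (Fin 3))).flatten ++ [1]] :
          List (List (Fin 3))), ¬ u <:+: l) :
    ∃ B : Module.Basis {l : List (Fin 3) // Std l} ℚ (MonoidAlgebra ℚ (PresentedGroup rels)),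
      ∀ w : {l : List (Fin 3) // Std l},
        B w = MonoidAlgebra.of ℚ (PresentedGroup rels)
          ((w.1.map (fun i => PresentedGroup.of (rels := rels) i)).prod) := by
  obtain ⟨c, rfl⟩ : ∃ c, k = c + 1 := ⟨k - 1, by omega⟩
  obtain rfl : rels = GrobnerShirshovW.wRels c := by
    rw [hrels, GrobnerShirshovW.wRels, show 2 * (c + 1) - 1 = 2 * c + 1 by omega]
  have hStd' : ∀ l, Std l ↔ GrobnerShirshovW.IsStandard c l := fun l => by
    simp only [hStd, GrobnerShirshovW.IsStandard, GrobnerShirshovW.leadingWords,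
      Nat.add_sub_cancel, GrobnerShirshovW.flatten_replicate_append_eq_alt]
  let e := (Equiv.subtypeEquivRight hStd').trans
    (GrobnerShirshovW.standardWordEquiv (by omega : 0 < c))
  refine ⟨(MonoidAlgebra.basis _ ℚ).reindex e.symm, fun w => ?_⟩
  rw [Module.Basis.reindex_apply, MonoidAlgebra.basis_apply, MonoidAlgebra.of_apply]
  rfl
end

section
/- Let k ≥ 2 and m = 2k. In the group W(m) = ⟨s₁,s₂,s₃ : s₁² = s₂² = s₃² = (s₁s₂)^m = (s₂s₃)^m = e⟩, the identity (s₁s₂)^{k−1} s₁ (s₃s₂)^k = (s₂s₁)^k s₃ (s₂s₃)^{k−1} holds. -/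
/-!
In a group generated by involutions, the relation `(s t) ^ (2 k) = 1` is equivalent to the
braid relation `(s t) ^ k = (t s) ^ k`, because `((s t) ^ k)⁻¹ = (t s) ^ k`. After replacing
`(s₃ s₂) ^ k` by `(s₂ s₃) ^ k`, peeling off its first factor `s₂ s₃` turns the left-hand side into
`(s₁ s₂) ^ k s₃ (s₂ s₃) ^ (k - 1)`, and the braid relation for `s₁, s₂` finishes the proof.
-/

section Braid

variable {G : Type*} [Group G]

theorem mul_pow_eq_mul_pow_swap_of_sq_eq_one {a b : G} {k : ℕ} (ha : a ^ 2 = 1) (hb : b ^ 2 = 1)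
    (hab : (a * b) ^ (2 * k) = 1) : (a * b) ^ k = (b * a) ^ k := by
  have ha' : a⁻¹ = a := inv_eq_of_mul_eq_one_right (by rw [← sq, ha])
  have hb' : b⁻¹ = b := inv_eq_of_mul_eq_one_right (by rw [← sq, hb])
  calc (a * b) ^ k = ((a * b) ^ k)⁻¹ :=
        eq_inv_of_mul_eq_one_left (by rw [← pow_add, ← two_mul, hab])
    _ = (b * a) ^ k := by rw [← inv_pow, mul_inv_rev, ha', hb']

theorem mul_pow_pred_mul_mul_pow_eq {a b c : G} {k : ℕ} (hk : 1 ≤ k)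
    (hab : (a * b) ^ k = (b * a) ^ k) (hbc : (b * c) ^ k = (c * b) ^ k) :
    (a * b) ^ (k - 1) * a * (c * b) ^ k = (b * a) ^ k * c * (b * c) ^ (k - 1) := by
  obtain ⟨n, rfl⟩ : ∃ n, k = n + 1 := ⟨k - 1, by omega⟩
  rw [Nat.add_sub_cancel, ← hbc, ← hab]
  rw [pow_succ' (b * c), pow_succ (a * b)]
  simp only [mul_assoc]

end Braid

theorem stmt_17 (k : ℕ) (hk : 2 ≤ k)
    (rels : Set (FreeGroup (Fin 3)))
    (hrels : rels = {FreeGroup.of 0 ^ 2, FreeGroup.of 1 ^ 2, FreeGroup.of 2 ^ 2,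
      (FreeGroup.of 0 * FreeGroup.of 1) ^ (2 * k),
      (FreeGroup.of 1 * FreeGroup.of 2) ^ (2 * k)})
    (s₁ s₂ s₃ : PresentedGroup rels)
    (h1 : s₁ = PresentedGroup.of 0) (h2 : s₂ = PresentedGroup.of 1)
    (h3 : s₃ = PresentedGroup.of 2) :
    (s₁ * s₂) ^ (k - 1) * s₁ * (s₃ * s₂) ^ k = (s₂ * s₁) ^ k * s₃ * (s₂ * s₃) ^ (k - 1) := by
  subst h1 h2 h3
  have rel : ∀ r ∈ rels, PresentedGroup.mk rels r = 1 := fun _ => PresentedGroup.one_of_mem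
  have e1 := rel _ (by simp [hrels] : FreeGroup.of 0 ^ 2 ∈ rels)
  have e2 := rel _ (by simp [hrels] : FreeGroup.of 1 ^ 2 ∈ rels)
  have e3 := rel _ (by simp [hrels] : FreeGroup.of 2 ^ 2 ∈ rels)
  have e12 := rel _ (by simp [hrels] : (FreeGroup.of 0 * FreeGroup.of 1) ^ (2 * k) ∈ rels)
  have e23 := rel _ (by simp [hrels] : (FreeGroup.of 1 * FreeGroup.of 2) ^ (2 * k) ∈ rels)
  simp only [map_pow, map_mul] at e1 e2 e3 e12 e23
  exact mul_pow_pred_mul_mul_pow_eq (by omega)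
    (mul_pow_eq_mul_pow_swap_of_sq_eq_one e1 e2 e12)
    (mul_pow_eq_mul_pow_swap_of_sq_eq_one e2 e3 e23)
end
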